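/- arXiv:2602.12188 — 2 statements merged into one kernel-verified Lean document; each statement's English description precedes it below -/
import Mathlib

section
/- (Explicit postdoctoral bound.) Consider the postdoctoral update P_{t+1} = (1 - p_PF(F_t) - a_P)·P_t + p_GP·g_G·G_t. Assume P_0 ≥ 0, P_t ≥ 0 and G_t ≥ 0 for all t, 0 < a_P, p_PF(F_t) ≥ 0 and p_PF(F_t) + a_P ≤ 1 for all t, p_GP ≥ 0, g_G ≥ 0, and G_t ≤ M_G for all t for some constant M_G ≥ 0. Then P_t ≤ P_0 + p_GP·g_G·M_G/a_P for every t ≥ 0. -/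
/-- Explicit postdoctoral bound. -/
theorem postdoc_bound
    (P G F : ℕ → ℝ) (a_P p_GP g_G M_G : ℝ) (p_PF : ℝ → ℝ)
    (hPupd : ∀ t, P (t + 1) = (1 - p_PF (F t) - a_P) * P t + p_GP * g_G * G t)
    (hP0 : 0 ≤ P 0)
    (hP : ∀ t, 0 ≤ P t) (hG : ∀ t, 0 ≤ G t)
    (haP : 0 < a_P)
    (hpPF : ∀ t, 0 ≤ p_PF (F t) ∧ p_PF (F t) + a_P ≤ 1)
    (hpGP : 0 ≤ p_GP) (hgG : 0 ≤ g_G)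
    (hMG : 0 ≤ M_G) (hGb : ∀ t, G t ≤ M_G) :
    ∀ t, P t ≤ P 0 + p_GP * g_G * M_G / a_P := by
  intro t
  induction t with
  | zero =>
    have : 0 ≤ p_GP * g_G * M_G / a_P :=
      div_nonneg (by positivity) haP.le
    linarith
  | succ n ih =>
    have h1 := (hpPF n).1
    have h2 := (hpPF n).2
    have hCG : p_GP * g_G * G n ≤ p_GP * g_G * M_G :=
      mul_le_mul_of_nonneg_left (hGb n) (by positivity)
    have hcoef : (1 - p_PF (F n) - a_P) * P n ≤ (1 - a_P) * P n := by
      apply mul_le_mul_of_nonneg_right _ (hP n)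
      linarith
    have hdiv : a_P * (p_GP * g_G * M_G / a_P) = p_GP * g_G * M_G := by
      field_simp
    rw [hPupd n]
    nlinarith [mul_nonneg haP.le hP0, mul_pos haP (lt_of_lt_of_le haP (by linarith : a_P ≤ 1))]
end

section
/- (Boundedness under bounded inflow and positive exit.) Consider the discrete-time academic pipeline model. Assume U_0, G_0, P_0, F_0 ≥ 0; 0 ≤ B(t) ≤ B_max for all t; g_U + a_U > 0, g_G + a_G > 0, a_P > 0, a_F > 0; g_U + a_U ≤ 1, g_G + a_G ≤ 1, a_F ≤ 1; g_U, g_G, p_GP, p_GF ≥ 0; and 0 ≤ p_UG(G_t) ≤ 1 and 0 ≤ p_PF(F_t) ≤ 1 - a_P for all t. Then every trajectory is bounded: there exist real constants M_U, M_G, M_P, M_F such that U_t ≤ M_U, G_t ≤ M_G, P_t ≤ M_P and F_t ≤ M_F for all t ≥ 0. -/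
lemma seq_bound_aux (x : ℕ → ℝ) (δ c : ℝ) (hδ : 0 < δ) (hδ1 : δ ≤ 1) (_hc : 0 ≤ c)
    (h : ∀ t, x (t + 1) ≤ (1 - δ) * x t + c) :
    ∀ t, x t ≤ max (x 0) (c / δ) := by
  intro t
  induction t with
  | zero => exact le_max_left _ _
  | succ n ih =>
    have h1 : (1 - δ) * x n ≤ (1 - δ) * max (x 0) (c / δ) :=
      mul_le_mul_of_nonneg_left ih (by linarith)
    have h2 : c / δ ≤ max (x 0) (c / δ) := le_max_right _ _
    have h3 : c ≤ δ * max (x 0) (c / δ) := by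
      rw [div_le_iff₀ hδ] at h2; nlinarith
    have := h n
    nlinarith

/-- Boundedness of the academic pipeline under bounded inflow and positive exit. -/
theorem pipeline_boundedness
    (U G P F : ℕ → ℝ) (B : ℕ → ℝ)
    (g_U a_U g_G a_G a_P a_F p_GP p_GF B_max : ℝ) (p_UG p_PF : ℝ → ℝ)
    (hUupd : ∀ t, U (t + 1) = (1 - g_U - a_U) * U t + B t)
    (hGupd : ∀ t, G (t + 1) = (1 - g_G - a_G) * G t + p_UG (G t) * g_U * U t)
    (hPupd : ∀ t, P (t + 1) = (1 - p_PF (F t) - a_P) * P t + p_GP * g_G * G t)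
    (hFupd : ∀ t, F (t + 1) = (1 - a_F) * F t + p_GF * g_G * G t + p_PF (F t) * P t)
    (hU0 : 0 ≤ U 0) (hG0 : 0 ≤ G 0) (hP0 : 0 ≤ P 0) (hF0 : 0 ≤ F 0)
    (hB : ∀ t, 0 ≤ B t ∧ B t ≤ B_max)
    (hUApos : 0 < g_U + a_U) (hGApos : 0 < g_G + a_G) (haP : 0 < a_P) (haF : 0 < a_F)
    (hUA : g_U + a_U ≤ 1) (hGA : g_G + a_G ≤ 1) (haF1 : a_F ≤ 1)
    (hgU : 0 ≤ g_U) (hgG : 0 ≤ g_G) (hpGP : 0 ≤ p_GP) (hpGF : 0 ≤ p_GF)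
    (hpUG : ∀ t, 0 ≤ p_UG (G t) ∧ p_UG (G t) ≤ 1)
    (hpPF : ∀ t, 0 ≤ p_PF (F t) ∧ p_PF (F t) ≤ 1 - a_P) :
    ∃ M_U M_G M_P M_F : ℝ,
      ∀ t, U t ≤ M_U ∧ G t ≤ M_G ∧ P t ≤ M_P ∧ F t ≤ M_F := by
  -- nonnegativity of all trajectories
  have hnn : ∀ t, 0 ≤ U t ∧ 0 ≤ G t ∧ 0 ≤ P t ∧ 0 ≤ F t := by
    intro t
    induction t with
    | zero => exact ⟨hU0, hG0, hP0, hF0⟩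
    | succ n ih =>
      obtain ⟨hu, hg, hp, hf⟩ := ih
      obtain ⟨hpu1, hpu2⟩ := hpUG n
      obtain ⟨hpf1, hpf2⟩ := hpPF n
      obtain ⟨hb1, hb2⟩ := hB n
      refine ⟨?_, ?_, ?_, ?_⟩
      · rw [hUupd]; nlinarith
      · rw [hGupd]; nlinarith [mul_nonneg (mul_nonneg hpu1 hgU) hu]
      · rw [hPupd]; nlinarith [mul_nonneg (mul_nonneg hpGP hgG) hg]
      · rw [hFupd]
        nlinarith [mul_nonneg (mul_nonneg hpGF hgG) hg, mul_nonneg hpf1 hp,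
          mul_nonneg (sub_nonneg.mpr haF1) hf]
  have haP1 : a_P ≤ 1 := by have := hpPF 0; linarith [this.1, this.2]
  have hBmax : 0 ≤ B_max := le_trans (hB 0).1 (hB 0).2
  -- bound on U
  set M_U := max (U 0) (B_max / (g_U + a_U)) with hMU
  have hUb : ∀ t, U t ≤ M_U := by
    apply seq_bound_aux U (g_U + a_U) B_max hUApos hUA hBmax
    intro t
    rw [hUupd]
    have := (hB t).2
    linarith [le_refl ((1 - (g_U + a_U)) * U t)]
  have hMU0 : 0 ≤ M_U := le_trans hU0 (le_max_left _ _)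
  -- bound on G
  set M_G := max (G 0) (g_U * M_U / (g_G + a_G)) with hMG
  have hGb : ∀ t, G t ≤ M_G := by
    apply seq_bound_aux G (g_G + a_G) (g_U * M_U) hGApos hGA (mul_nonneg hgU hMU0)
    intro t
    rw [hGupd]
    obtain ⟨hpu1, hpu2⟩ := hpUG t
    have hu := (hnn t).1
    have h1 : p_UG (G t) * g_U * U t ≤ g_U * U t := by nlinarith [mul_nonneg hgU hu]
    have h2 : g_U * U t ≤ g_U * M_U := mul_le_mul_of_nonneg_left (hUb t) hgU
    linarith
  have hMG0 : 0 ≤ M_G := le_trans hG0 (le_max_left _ _)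
  -- bound on P
  set M_P := max (P 0) (p_GP * g_G * M_G / a_P) with hMP
  have hPb : ∀ t, P t ≤ M_P := by
    apply seq_bound_aux P a_P (p_GP * g_G * M_G) haP haP1
      (mul_nonneg (mul_nonneg hpGP hgG) hMG0)
    intro t
    rw [hPupd]
    obtain ⟨hpf1, hpf2⟩ := hpPF t
    have hp := (hnn t).2.2.1
    have h1 : (1 - p_PF (F t) - a_P) * P t ≤ (1 - a_P) * P t :=
      mul_le_mul_of_nonneg_right (by linarith) hp
    have h2 : p_GP * g_G * G t ≤ p_GP * g_G * M_G :=
      mul_le_mul_of_nonneg_left (hGb t) (mul_nonneg hpGP hgG)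
    linarith
  have hMP0 : 0 ≤ M_P := le_trans hP0 (le_max_left _ _)
  -- bound on F
  set c_F := p_GF * g_G * M_G + (1 - a_P) * M_P with hcF
  have hcF0 : 0 ≤ c_F :=
    add_nonneg (mul_nonneg (mul_nonneg hpGF hgG) hMG0)
      (mul_nonneg (by linarith) hMP0)
  set M_F := max (F 0) (c_F / a_F) with hMF
  have hFb : ∀ t, F t ≤ M_F := by
    apply seq_bound_aux F a_F c_F haF haF1 hcF0
    intro t
    rw [hFupd]
    obtain ⟨hpf1, hpf2⟩ := hpPF t
    have hp := (hnn t).2.2.1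
    have hg := (hnn t).2.1
    have h1 : p_GF * g_G * G t ≤ p_GF * g_G * M_G :=
      mul_le_mul_of_nonneg_left (hGb t) (mul_nonneg hpGF hgG)
    have h2 : p_PF (F t) * P t ≤ (1 - a_P) * M_P :=
      mul_le_mul hpf2 (hPb t) hp (by linarith)
    linarith [hcF]
  exact ⟨M_U, M_G, M_P, M_F, fun t => ⟨hUb t, hGb t, hPb t, hFb t⟩⟩
end
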